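/- For p, q, r positive integers, the symmetric matrix S(E_{p,q,r}) (of size 1+p+q+r, with (0,0)-entry 2, three diagonal blocks M_p, M_q, M_r, the (0,j)-entries equal to 1 precisely when j is the first index of a block, and zeros elsewhere) is positive definite if and only if -pqr + p + q + r + 2 > 0. -/

import Mathlib

/-!
Write `S = SE p q r` as the block-diagonal matrix `B = M_p ⊕ M_q ⊕ M_r` bordered by the corner
entry `2` and the indicator vector `u` of the first indices of the blocks. If `B` is positive
definite and `B w = u`, completing the square gives, for `x = (t, y)`,
`xᵀ S x = (y + t w)ᵀ B (y + t w) + (2 - u ⬝ w) t²`,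
so `S` is positive definite iff `u ⬝ w < 2` (a Schur complement). The solution of `M_m w = e₀` is
`w_j = (-1)ʲ (m - j) / (m + 1)`, hence `u ⬝ w = p/(p+1) + q/(q+1) + r/(r+1)`, and
`2 - u ⬝ w = (2 + p + q + r - pqr) / ((p+1)(q+1)(r+1))`. Positive definiteness of `M_m` follows
from the same criterion by induction, since `M_{m+1}` is `M_m` bordered by `2` and `e₀`.
-/

/-- The p×p tridiagonal matrix with 2's on the diagonal and 1's on the
super- and sub-diagonal. -/
def Mtri (p : ℕ) : Matrix (Fin p) (Fin p) ℝ :=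
  fun i j => if i = j then 2 else if (i : ℕ) + 1 = j ∨ (j : ℕ) + 1 = i then 1 else 0

/-- Whether an index of `Fin p ⊕ Fin q ⊕ Fin r` is the first index of its block. -/
def isFirst {p q r : ℕ} : Fin p ⊕ Fin q ⊕ Fin r → Prop
  | .inl i => (i : ℕ) = 0
  | .inr (.inl i) => (i : ℕ) = 0
  | .inr (.inr i) => (i : ℕ) = 0

instance {p q r : ℕ} : DecidablePred (isFirst (p := p) (q := q) (r := r)) := by
  intro x; rcases x with i | i | i <;> simp [isFirst] <;> infer_instance

/-- The block-diagonal part `M_p ⊕ M_q ⊕ M_r`. -/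
def blockMtri (p q r : ℕ) :
    Matrix (Fin p ⊕ Fin q ⊕ Fin r) (Fin p ⊕ Fin q ⊕ Fin r) ℝ
  | .inl i, .inl j => Mtri p i j
  | .inr (.inl i), .inr (.inl j) => Mtri q i j
  | .inr (.inr i), .inr (.inr j) => Mtri r i j
  | _, _ => 0

/-- The symmetrized Seifert matrix of the fiber surface of the divide `E_{p,q,r}`. -/
def SE (p q r : ℕ) :
    Matrix (Unit ⊕ (Fin p ⊕ Fin q ⊕ Fin r)) (Unit ⊕ (Fin p ⊕ Fin q ⊕ Fin r)) ℝ
  | .inl _, .inl _ => 2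
  | .inl _, .inr b => if isFirst b then 1 else 0
  | .inr a, .inl _ => if isFirst a then 1 else 0
  | .inr a, .inr b => blockMtri p q r a b

namespace Matrix

variable {n : Type*}

def bordered (c : ℝ) (u : n → ℝ) (B : Matrix n n ℝ) :
    Matrix (Unit ⊕ n) (Unit ⊕ n) ℝ :=
  fromBlocks (of fun _ _ => c) (replicateRow Unit u) (replicateCol Unit u) B

theorem IsHermitian.bordered {B : Matrix n n ℝ} (hB : B.IsHermitian) (c : ℝ) (u : n → ℝ) :
    (bordered c u B).IsHermitian :=
  IsHermitian.fromBlocks (by ext; rfl) (by ext; rfl) hB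

variable [Fintype n]

theorem sumElim_dotProduct_bordered_mulVec (c : ℝ) (u : n → ℝ) (B : Matrix n n ℝ) (t : ℝ)
    (y : n → ℝ) :
    Sum.elim (fun _ => t) y ⬝ᵥ bordered c u B *ᵥ Sum.elim (fun _ => t) y =
      c * t ^ 2 + 2 * t * (u ⬝ᵥ y) + y ⬝ᵥ B *ᵥ y := by
  simp only [bordered, fromBlocks_mulVec, sumElim_dotProduct_sumElim, Sum.elim_comp_inl,
    Sum.elim_comp_inr, dotProduct_add]
  have hcol : replicateCol Unit u *ᵥ (fun _ => t) = t • u := by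
    ext; simp [mulVec, dotProduct, mul_comm]
  have hrow : (fun _ => t) ⬝ᵥ replicateRow Unit u *ᵥ y = t * (u ⬝ᵥ y) := by
    simp [replicateRow_mulVec_eq_const, dotProduct]
  have hcorner : (fun _ => t) ⬝ᵥ (of fun _ _ => c : Matrix Unit Unit ℝ) *ᵥ (fun _ => t) =
      c * t ^ 2 := by
    simp [dotProduct, mulVec]; ring
  rw [hcol, hrow, hcorner, dotProduct_smul, smul_eq_mul, dotProduct_comm y u]
  ring

theorem dotProduct_mulVec_add_smul {B : Matrix n n ℝ} (hB : B.IsHermitian) {u w : n → ℝ}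
    (hw : B *ᵥ w = u) (y : n → ℝ) (t : ℝ) :
    (y + t • w) ⬝ᵥ B *ᵥ (y + t • w) =
      y ⬝ᵥ B *ᵥ y + 2 * t * (u ⬝ᵥ y) + t ^ 2 * (u ⬝ᵥ w) := by
  have hwB : w ᵥ* B = u := by
    rw [← mulVec_transpose, ← conjTranspose_eq_transpose_of_trivial, hB, hw]
  have hwy : w ⬝ᵥ B *ᵥ y = u ⬝ᵥ y := by rw [dotProduct_mulVec, hwB]
  simp only [mulVec_add, mulVec_smul, hw, dotProduct_add, add_dotProduct, dotProduct_smul,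
    smul_dotProduct, hwy, smul_eq_mul, dotProduct_comm y u, dotProduct_comm w u]
  ring

theorem sumElim_dotProduct_bordered_mulVec_eq {B : Matrix n n ℝ} (hB : B.IsHermitian)
    {u w : n → ℝ} (hw : B *ᵥ w = u) (c t : ℝ) (y : n → ℝ) :
    Sum.elim (fun _ => t) y ⬝ᵥ bordered c u B *ᵥ Sum.elim (fun _ => t) y =
      (y + t • w) ⬝ᵥ B *ᵥ (y + t • w) + (c - u ⬝ᵥ w) * t ^ 2 := by
  rw [sumElim_dotProduct_bordered_mulVec, dotProduct_mulVec_add_smul hB hw]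
  ring

theorem posDef_bordered_iff {B : Matrix n n ℝ} (hB : B.PosDef) {u w : n → ℝ}
    (hw : B *ᵥ w = u) (c : ℝ) : (bordered c u B).PosDef ↔ u ⬝ᵥ w < c := by
  constructor
  · intro h
    have hx : (Sum.elim (fun _ => 1) (-w) : Unit ⊕ n → ℝ) ≠ 0 :=
      fun h0 => one_ne_zero (congrFun h0 (Sum.inl ()))
    have hpos := h.dotProduct_mulVec_pos hx
    rw [star_trivial, sumElim_dotProduct_bordered_mulVec_eq hB.isHermitian hw] at hpos
    simpa using hpos
  · intro h
    refine .of_dotProduct_mulVec_pos (hB.isHermitian.bordered c u) fun x hx => ?_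
    obtain ⟨t, y, rfl⟩ : ∃ t y, x = Sum.elim (fun _ => t) y :=
      ⟨x (Sum.inl ()), x ∘ Sum.inr, by ext (_ | _) <;> rfl⟩
    rw [star_trivial, sumElim_dotProduct_bordered_mulVec_eq hB.isHermitian hw]
    rcases eq_or_ne t 0 with rfl | ht
    · have hy : y ≠ 0 := by rintro rfl; exact hx (by ext (_ | _) <;> rfl)
      simpa using hB.dotProduct_mulVec_pos hy
    · have hsq := hB.posSemidef.dotProduct_mulVec_nonneg (y + t • w)
      rw [star_trivial] at hsq
      have : 0 < (c - u ⬝ᵥ w) * t ^ 2 := mul_pos (sub_pos.2 h) (by positivity)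
      linarith

theorem PosDef.fromBlocks_zero {m n : Type*} [Fintype m] [Fintype n] {A : Matrix m m ℝ}
    {D : Matrix n n ℝ} (hA : A.PosDef) (hD : D.PosDef) : (fromBlocks A 0 0 D).PosDef := by
  refine .of_dotProduct_mulVec_pos (hA.isHermitian.fromBlocks (by simp) hD.isHermitian)
    fun x hx => ?_
  obtain ⟨y, z, rfl⟩ : ∃ y z, x = Sum.elim y z := ⟨_, _, (Sum.elim_comp_inl_inr x).symm⟩
  simp only [star_trivial, fromBlocks_mulVec, Sum.elim_comp_inl, Sum.elim_comp_inr, zero_mulVec,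
    add_zero, zero_add, sumElim_dotProduct_sumElim]
  have hy := hA.posSemidef.dotProduct_mulVec_nonneg y
  have hz := hD.posSemidef.dotProduct_mulVec_nonneg z
  rw [star_trivial] at hy hz
  rcases eq_or_ne y 0 with rfl | hy0
  · have hz0 : z ≠ 0 := by rintro rfl; exact hx (by ext (_ | _) <;> rfl)
    simpa using hD.dotProduct_mulVec_pos hz0
  · have := hA.dotProduct_mulVec_pos hy0
    rw [star_trivial] at this
    linarith

end Matrix

open Matrix

theorem Mtri_mulVec_apply {m : ℕ} (f : ℕ → ℝ) (hf : f m = 0) (i : Fin m) :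
    (Mtri m *ᵥ fun j => f j) i =
      (if (i : ℕ) = 0 then 0 else f (i - 1)) + 2 * f i + f (i + 1) := by
  have hterm : ∀ j : ℕ,
      (if (i : ℕ) = j then 2 else if (i : ℕ) + 1 = j ∨ j + 1 = i then 1 else 0) * f j =
        (if j = (i : ℕ) - 1 ∧ (i : ℕ) ≠ 0 then f j else 0) + (if j = i then 2 * f j else 0) +
          (if j = i + 1 then f j else 0) := by
    intro j; split_ifs <;> first | omega | ring
  simp only [mulVec, dotProduct, Mtri, Fin.ext_iff]
  rw [Fin.sum_univ_eq_sum_range (fun j => (if (i : ℕ) = j then (2 : ℝ) else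
    if (i : ℕ) + 1 = j ∨ j + 1 = i then 1 else 0) * f j) m]
  simp only [hterm, Finset.sum_add_distrib, Finset.sum_ite_eq', Finset.mem_range, ite_and]
  have hlast : (if (i : ℕ) + 1 < m then f (i + 1) else 0) = f (i + 1) := by
    split_ifs with h
    · rfl
    · rw [show (i : ℕ) + 1 = m by omega, hf]
  rw [hlast, if_pos (show (i : ℕ) - 1 < m by omega), if_pos i.isLt, ite_not]

def firstIndicator (m : ℕ) : Fin m → ℝ := fun i => if (i : ℕ) = 0 then 1 else 0

/-- Restricted to `Fin m`, the first column of `(Mtri m)⁻¹`; it vanishes at `j = m`. -/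
noncomputable def altRamp (m : ℕ) (j : ℕ) : ℝ := (-1) ^ j * ((m - j) / (m + 1))

theorem Mtri_mulVec_altRamp (m : ℕ) : Mtri m *ᵥ (fun j => altRamp m j) = firstIndicator m := by
  ext ⟨i, hi⟩
  rw [Mtri_mulVec_apply _ (by simp [altRamp])]
  have hm : (m : ℝ) + 1 ≠ 0 := by positivity
  rcases i with _ | k
  · simp [altRamp, firstIndicator]
    field_simp
    ring
  · simp [altRamp, firstIndicator, pow_succ]
    field_simp
    ring

theorem firstIndicator_dotProduct_altRamp (m : ℕ) :
    firstIndicator m ⬝ᵥ (fun j => altRamp m j) = m / (m + 1) := by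
  cases m with
  | zero => simp [dotProduct]
  | succ m => simp [dotProduct, firstIndicator, altRamp]

theorem Mtri_succ (m : ℕ) :
    Mtri (m + 1) = (bordered 2 (firstIndicator m) (Mtri m)).submatrix
      (Fin.cases (Sum.inl ()) Sum.inr) (Fin.cases (Sum.inl ()) Sum.inr) := by
  ext i j
  cases i using Fin.cases <;> cases j using Fin.cases <;>
    simp [Mtri, bordered, firstIndicator, Fin.ext_iff]

theorem Mtri_posDef : ∀ m, (Mtri m).PosDef
  | 0 => .of_dotProduct_mulVec_pos (by ext i; exact i.elim0)
      fun x hx => (hx (Subsingleton.elim _ _)).elim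
  | m + 1 => by
    have hinj : Function.Injective
        (Fin.cases (Sum.inl ()) Sum.inr : Fin (m + 1) → Unit ⊕ Fin m) := by
      intro i j h
      cases i using Fin.cases <;> cases j using Fin.cases <;> simp_all [Fin.ext_iff]
    have hlt : firstIndicator m ⬝ᵥ (fun j => altRamp m j) < 2 := by
      rw [firstIndicator_dotProduct_altRamp, div_lt_iff₀ (by positivity)]
      linarith
    rw [Mtri_succ]
    exact ((posDef_bordered_iff (Mtri_posDef m) (Mtri_mulVec_altRamp m) 2).2 hlt).submatrix hinj

theorem blockMtri_eq_fromBlocks (p q r : ℕ) :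
    blockMtri p q r = fromBlocks (Mtri p) 0 0 (fromBlocks (Mtri q) 0 0 (Mtri r)) := by
  ext (i | i | i) (j | j | j) <;> rfl

theorem blockMtri_posDef (p q r : ℕ) : (blockMtri p q r).PosDef := by
  rw [blockMtri_eq_fromBlocks]
  exact (Mtri_posDef p).fromBlocks_zero ((Mtri_posDef q).fromBlocks_zero (Mtri_posDef r))

theorem blockMtri_mulVec_altRamp (p q r : ℕ) :
    blockMtri p q r *ᵥ
        Sum.elim (fun j => altRamp p j) (Sum.elim (fun j => altRamp q j) (fun j => altRamp r j)) =
      Sum.elim (firstIndicator p) (Sum.elim (firstIndicator q) (firstIndicator r)) := by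
  simp [blockMtri_eq_fromBlocks, fromBlocks_mulVec, Mtri_mulVec_altRamp]

theorem SE_eq_bordered (p q r : ℕ) :
    SE p q r =
      bordered 2 (Sum.elim (firstIndicator p) (Sum.elim (firstIndicator q) (firstIndicator r)))
        (blockMtri p q r) := by
  ext (_ | i | i | i) (_ | j | j | j) <;> simp [SE, bordered, isFirst, firstIndicator]

theorem SE_posDef_iff_general (p q r : ℕ) :
    (SE p q r).PosDef ↔ (0 : ℝ) < -(p * q * r : ℝ) + p + q + r + 2 := by
  rw [SE_eq_bordered,
    posDef_bordered_iff (blockMtri_posDef p q r) (blockMtri_mulVec_altRamp p q r)]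
  simp only [sumElim_dotProduct_sumElim, firstIndicator_dotProduct_altRamp]
  have hschur : 2 - (p / (p + 1) + (q / (q + 1) + r / (r + 1)) : ℝ) =
      (-(p * q * r : ℝ) + p + q + r + 2) / ((p + 1) * (q + 1) * (r + 1)) := by
    field_simp
    ring
  rw [← sub_pos, hschur, div_pos_iff_of_pos_right (by positivity)]

theorem SE_posDef_iff (p q r : ℕ) (hp : 0 < p) (hq : 0 < q) (hr : 0 < r) :
    (SE p q r).PosDef ↔ (0 : ℝ) < -(p * q * r : ℝ) + p + q + r + 2 :=
  SE_posDef_iff_general p q r
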